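/- arXiv:1208.2714 — 4 statements merged into one kernel-verified Lean document; each statement's English description precedes it below -/
import Mathlib

section
/- Let A be an integral domain with field of fractions K, let H be an associative A-algebra, finitely generated and free as an A-module, which is Z-graded, and let O be a valuation ring with A ⊆ O ⊆ K. Then every finite-dimensional graded KH-module V = ⊕_{j∈Z} V_j admits a graded OH-lattice Ṽ = ⊕_{ℓ∈Z} Ṽ_ℓ: a graded OH-submodule of V, finitely generated and free as an O-module, with each Ṽ_ℓ an O-submodule of V_ℓ, such that V ≅ K ⊗_O Ṽ as graded KH-modules (any O-basis of Ṽ is a K-basis of V). -/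
universe u

open DirectSum Function

/-! ## Modules over `S ⊗_A H`

For an `A`-algebra `H` and a commutative `A`-algebra `S`, a (finitely generated) module over
the `S`-algebra `S ⊗_A H` is the same thing as an `S`-module together with a commuting
`H`-action such that the two induced `A`-actions agree.  We package this data in a structure. -/

structure ModPkg (A : Type u) [CommRing A] (H : Type u) [Ring H] [Algebra A H]
    (S : Type u) [CommRing S] [Algebra A S] : Type (u + 1) where
  carrier : Type u
  [acg : AddCommGroup carrier]
  [modS : Module S carrier]
  [modH : Module H carrier]
  smul_comm' : ∀ (h : H) (s : S) (x : carrier), h • s • x = s • h • x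
  compat : ∀ (a : A) (x : carrier), (algebraMap A H a) • x = (algebraMap A S a) • x
  [fin : Module.Finite S carrier]

attribute [instance] ModPkg.acg ModPkg.modS ModPkg.modH ModPkg.fin

section Ungraded

variable {A : Type u} [CommRing A] {H : Type u} [Ring H] [Algebra A H]
  {S : Type u} [CommRing S] [Algebra A S]

namespace ModPkg

/-- A subgroup stable under both scalar actions, i.e. an `S ⊗_A H`-submodule. -/
def IsStable (M : ModPkg A H S) (p : AddSubgroup M.carrier) : Prop :=
  (∀ (s : S), ∀ x ∈ p, s • x ∈ p) ∧ (∀ (h : H), ∀ x ∈ p, h • x ∈ p)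

/-- Simplicity of an `S ⊗_A H`-module. -/
def Simple (M : ModPkg A H S) : Prop :=
  Nontrivial M.carrier ∧ ∀ p : AddSubgroup M.carrier, M.IsStable p → p = ⊥ ∨ p = ⊤

/-- Isomorphism of `S ⊗_A H`-modules. -/
def Iso (M N : ModPkg A H S) : Prop :=
  ∃ e : M.carrier ≃+ N.carrier,
    (∀ (s : S) (x : M.carrier), e (s • x) = s • e x) ∧
    (∀ (h : H) (x : M.carrier), e (h • x) = h • e x)

/-- The action of an element of `H` as an `S`-linear endomorphism. -/
noncomputable def act (M : ModPkg A H S) (h : H) : M.carrier →ₗ[S] M.carrier where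
  toFun x := h • x
  map_add' x y := smul_add h x y
  map_smul' s x := by simpa using M.smul_comm' h s x

/-- The character of an `S ⊗_A H`-module, as a function on `H`. -/
noncomputable def char (M : ModPkg A H S) : H → S :=
  fun h => LinearMap.trace S M.carrier (M.act h)

/-- The factor `q/p` is isomorphic to `M` (as `S ⊗_A H`-modules), witnessed by a surjection
`q → M` with kernel `p`. -/
def IsFactor (V : ModPkg A H S) (p q : AddSubgroup V.carrier) (M : ModPkg A H S) : Prop :=
  ∃ φ : q →+ M.carrier,
    Surjective φ ∧
    (∀ x : q, φ x = 0 ↔ (x : V.carrier) ∈ p) ∧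
    (∀ (s : S) (x y : q), (y : V.carrier) = s • (x : V.carrier) → φ y = s • φ x) ∧
    (∀ (h : H) (x y : q), (y : V.carrier) = h • (x : V.carrier) → φ y = h • φ x)

end ModPkg

/-- An (ungraded) composition series of an `S ⊗_A H`-module. -/
structure CompSeries (V : ModPkg A H S) : Type u where
  len : ℕ
  c : Fin (len + 1) → AddSubgroup V.carrier
  mono : ∀ t : Fin len, c t.castSucc ≤ c t.succ
  bot : c 0 = ⊥
  top : c (Fin.last len) = ⊤
  stable : ∀ t, V.IsStable (c t)
  steps : ∀ t : Fin len, c t.castSucc ≠ c t.succ ∧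
    ∀ p : AddSubgroup V.carrier, V.IsStable p → c t.castSucc ≤ p → p ≤ c t.succ →
      p = c t.castSucc ∨ p = c t.succ

/-- The multiplicity of the simple module `M` in a composition series. -/
noncomputable def ModPkg.mult (V : ModPkg A H S) (cs : CompSeries V) (M : ModPkg A H S) : ℕ :=
  Nat.card { t : Fin cs.len // V.IsFactor (cs.c t.castSucc) (cs.c t.succ) M }

end Ungraded

/-- The algebra `S ⊗_A H` is split: the endomorphism algebra of every simple module is `S`. -/
def SplitAlg (A : Type u) [CommRing A] (H : Type u) [Ring H] [Algebra A H]
    (S : Type u) [CommRing S] [Algebra A S] : Prop :=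
  ∀ M : ModPkg A H S, M.Simple →
    ∀ f : M.carrier →+ M.carrier,
      (∀ (s : S) (x : M.carrier), f (s • x) = s • f x) →
      (∀ (h : H) (x : M.carrier), f (h • x) = h • f x) →
      ∃ s : S, ∀ x, f x = s • x

/-- The set of irreducible characters of `S ⊗_A H`. -/
def IrrChars (A : Type u) [CommRing A] (H : Type u) [Ring H] [Algebra A H]
    (S : Type u) [CommRing S] [Algebra A S] : Set (H → S) :=
  { χ | ∃ M : ModPkg A H S, M.Simple ∧ χ = M.char }

/-! ## Graded modules over `S ⊗_A H` for a `ℤ`-graded algebra `H = ⊕ 𝒜 i` -/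

structure GrMod (A : Type u) [CommRing A] (H : Type u) [Ring H] [Algebra A H]
    (𝒜 : ℤ → Submodule A H) (S : Type u) [CommRing S] [Algebra A S] : Type (u + 1) where
  carrier : Type u
  [acg : AddCommGroup carrier]
  [modS : Module S carrier]
  [modH : Module H carrier]
  smul_comm' : ∀ (h : H) (s : S) (x : carrier), h • s • x = s • h • x
  compat : ∀ (a : A) (x : carrier), (algebraMap A H a) • x = (algebraMap A S a) • x
  [fin : Module.Finite S carrier]
  grading : ℤ → Submodule S carrier
  [decomp : DirectSum.Decomposition grading]
  grading_smul : ∀ (i j : ℤ) (h : H), h ∈ 𝒜 i → ∀ x ∈ grading j, h • x ∈ grading (i + j)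

attribute [instance] GrMod.acg GrMod.modS GrMod.modH GrMod.fin GrMod.decomp

section Graded

variable {A : Type u} [CommRing A] {H : Type u} [Ring H] [Algebra A H]
  {𝒜 : ℤ → Submodule A H} {S : Type u} [CommRing S] [Algebra A S]

namespace GrMod

/-- The underlying ungraded module of a graded module. -/
def forget (V : GrMod A H 𝒜 S) : ModPkg A H S where
  carrier := V.carrier
  acg := V.acg
  modS := V.modS
  modH := V.modH
  smul_comm' := V.smul_comm'
  compat := V.compat
  fin := V.fin

/-- The action of a degree-`0` element of `H` on the degree-`i` piece of a graded module,
as an `S`-linear endomorphism; this is the representation `ρ_{V_i}` restricted to `H_0`. -/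
noncomputable def degAct (V : GrMod A H 𝒜 S) (h : 𝒜 0) (i : ℤ) :
    V.grading i →ₗ[S] V.grading i where
  toFun x := ⟨(h : H) • (x : V.carrier), by
    simpa using V.grading_smul 0 i (h : H) h.2 (x : V.carrier) x.2⟩
  map_add' x y := by
    apply Subtype.ext
    simp [smul_add]
  map_smul' s x := by
    apply Subtype.ext
    simpa using V.smul_comm' (h : H) s (x : V.carrier)

/-- A subgroup which is an `S ⊗_A H`-submodule and is graded. -/
def IsGrSub (V : GrMod A H 𝒜 S) (p : AddSubgroup V.carrier) : Prop :=
  V.forget.IsStable p ∧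
    ∀ x ∈ p, ∀ i : ℤ, ((DirectSum.decompose V.grading x i : V.grading i) : V.carrier) ∈ p

/-- A graded module is graded-simple if it is nonzero and has no nontrivial graded submodule. -/
def GrSimple (V : GrMod A H 𝒜 S) : Prop :=
  Nontrivial V.carrier ∧ ∀ p : AddSubgroup V.carrier, V.IsGrSub p → p = ⊥ ∨ p = ⊤

/-- Isomorphism of graded modules. -/
def GrIso (V W : GrMod A H 𝒜 S) : Prop :=
  ∃ e : V.carrier ≃+ W.carrier,
    (∀ (s : S) (x : V.carrier), e (s • x) = s • e x) ∧
    (∀ (h : H) (x : V.carrier), e (h • x) = h • e x) ∧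
    (∀ (i : ℤ), ∀ x ∈ V.grading i, e x ∈ W.grading i)

/-- `W` is the shift `V⟨j⟩` of `V`, i.e. `W_i = V_{i-j}`. -/
def IsShiftOf (W V : GrMod A H 𝒜 S) (j : ℤ) : Prop :=
  ∃ e : W.carrier ≃+ V.carrier,
    (∀ (s : S) (x : W.carrier), e (s • x) = s • e x) ∧
    (∀ (h : H) (x : W.carrier), e (h • x) = h • e x) ∧
    (∀ (i : ℤ), ∀ x ∈ W.grading i, e x ∈ V.grading (i - j))

/-- The factor `q/p` of a graded module is isomorphic, as a graded module, to the shift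
`M⟨n⟩` of `M`. -/
def IsFactorShift (V : GrMod A H 𝒜 S) (p q : AddSubgroup V.carrier)
    (M : GrMod A H 𝒜 S) (n : ℤ) : Prop :=
  ∃ φ : q →+ M.carrier,
    Surjective φ ∧
    (∀ x : q, φ x = 0 ↔ (x : V.carrier) ∈ p) ∧
    (∀ (s : S) (x y : q), (y : V.carrier) = s • (x : V.carrier) → φ y = s • φ x) ∧
    (∀ (h : H) (x y : q), (y : V.carrier) = h • (x : V.carrier) → φ y = h • φ x) ∧
    (∀ (i : ℤ) (x : q), (x : V.carrier) ∈ V.grading i → φ x ∈ M.grading (i - n)) ∧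
    (∀ (i : ℤ), ∀ m ∈ M.grading (i - n), ∃ x : q, (x : V.carrier) ∈ V.grading i ∧ φ x = m)

end GrMod

/-- A graded composition series of a graded module. -/
structure GrCompSeries (V : GrMod A H 𝒜 S) : Type u where
  len : ℕ
  c : Fin (len + 1) → AddSubgroup V.carrier
  mono : ∀ t : Fin len, c t.castSucc ≤ c t.succ
  bot : c 0 = ⊥
  top : c (Fin.last len) = ⊤
  graded : ∀ t, V.IsGrSub (c t)
  steps : ∀ t : Fin len, c t.castSucc ≠ c t.succ ∧
    ∀ p : AddSubgroup V.carrier, V.IsGrSub p → c t.castSucc ≤ p → p ≤ c t.succ →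
      p = c t.castSucc ∨ p = c t.succ

/-- The multiplicity `[V : M⟨n⟩]^gr` of the shifted graded simple module `M⟨n⟩` in a graded
composition series of `V`. -/
noncomputable def GrMod.multShift (V : GrMod A H 𝒜 S) (cs : GrCompSeries V)
    (M : GrMod A H 𝒜 S) (n : ℤ) : ℕ :=
  Nat.card { t : Fin cs.len // V.IsFactorShift (cs.c t.castSucc) (cs.c t.succ) M n }

/-- The graded decomposition number `∑_n q^n [V : M⟨n⟩]^gr ∈ ℕ[q,q⁻¹]`. -/
noncomputable def GrMod.entryPoly (V : GrMod A H 𝒜 S) (cs : GrCompSeries V)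
    (M : GrMod A H 𝒜 S) : LaurentPolynomial ℕ :=
  ∑ᶠ n : ℤ, (V.multShift cs M n) • LaurentPolynomial.T n

/-- A short exact sequence of graded modules (morphisms are of degree `0`). -/
structure GrSES (X Y Z : GrMod A H 𝒜 S) : Type u where
  f : X.carrier →+ Y.carrier
  g : Y.carrier →+ Z.carrier
  f_smulS : ∀ (s : S) (x : X.carrier), f (s • x) = s • f x
  f_smulH : ∀ (h : H) (x : X.carrier), f (h • x) = h • f x
  g_smulS : ∀ (s : S) (y : Y.carrier), g (s • y) = s • g y
  g_smulH : ∀ (h : H) (y : Y.carrier), g (h • y) = h • g y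
  inj : Injective f
  surj : Surjective g
  exact : ∀ y : Y.carrier, g y = 0 ↔ ∃ x, f x = y
  f_graded : ∀ (i : ℤ), ∀ x ∈ X.grading i, f x ∈ Y.grading i
  g_graded : ∀ (i : ℤ), ∀ y ∈ Y.grading i, g y ∈ Z.grading i

end Graded

/-- The defining relations of the Grothendieck group of finite-dimensional graded modules. -/
def grRelSet (A : Type u) [CommRing A] (H : Type u) [Ring H] [Algebra A H]
    (𝒜 : ℤ → Submodule A H) (S : Type u) [CommRing S] [Algebra A S] :
    Set (FreeAbelianGroup (GrMod A H 𝒜 S)) :=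
  { z | ∃ X Y Z : GrMod A H 𝒜 S, Nonempty (GrSES X Y Z) ∧
      z = FreeAbelianGroup.of Y - FreeAbelianGroup.of X - FreeAbelianGroup.of Z }

/-- The Grothendieck group `R_0(S ⊗_A H)` of finite-dimensional graded modules. -/
def Groth (A : Type u) [CommRing A] (H : Type u) [Ring H] [Algebra A H]
    (𝒜 : ℤ → Submodule A H) (S : Type u) [CommRing S] [Algebra A S] : Type (u + 1) :=
  FreeAbelianGroup (GrMod A H 𝒜 S) ⧸ AddSubgroup.closure (grRelSet A H 𝒜 S)

noncomputable instance (A : Type u) [CommRing A] (H : Type u) [Ring H] [Algebra A H]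
    (𝒜 : ℤ → Submodule A H) (S : Type u) [CommRing S] [Algebra A S] :
    AddCommGroup (Groth A H 𝒜 S) :=
  inferInstanceAs
    (AddCommGroup (FreeAbelianGroup (GrMod A H 𝒜 S) ⧸ AddSubgroup.closure (grRelSet A H 𝒜 S)))

/-- The class `[V]` of a graded module in the Grothendieck group; `R_0^+` is the set of
all such classes. -/
def GrMod.cls {A : Type u} [CommRing A] {H : Type u} [Ring H] [Algebra A H]
    {𝒜 : ℤ → Submodule A H} {S : Type u} [CommRing S] [Algebra A S]
    (V : GrMod A H 𝒜 S) : Groth A H 𝒜 S :=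
  QuotientAddGroup.mk (FreeAbelianGroup.of V)

section Char

variable {A : Type u} [CommRing A] {H : Type u} [Ring H] [Algebra A H]
  {𝒜 : ℤ → Submodule A H} {S : Type u} [CommRing S] [Algebra A S]

/-- The graded character of a graded module, as a function `H → S[t,t⁻¹]`:
it vanishes on the components of degree `≠ 0` and sends `h₀ ∈ H_0` to
`∑_i t^i χ_{V_i}(h₀)`. -/
noncomputable def GrMod.grChar [DirectSum.Decomposition 𝒜] (V : GrMod A H 𝒜 S) :
    H → LaurentPolynomial S :=
  fun h => ∑ᶠ i : ℤ, LaurentPolynomial.T i *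
    LaurentPolynomial.C
      (LinearMap.trace S (V.grading i) (V.degAct (DirectSum.decompose 𝒜 h 0) i))

/-- The set of irreducible graded characters `{χ^gr_{M⟨j⟩}}`: graded characters of graded
modules whose underlying ungraded module is simple (the grading of a simple module being
unique up to shift). -/
def IrrGrChars (A : Type u) [CommRing A] (H : Type u) [Ring H] [Algebra A H]
    (𝒜 : ℤ → Submodule A H) [DirectSum.Decomposition 𝒜]
    (S : Type u) [CommRing S] [Algebra A S] : Set (H → LaurentPolynomial S) :=
  { χ | ∃ V : GrMod A H 𝒜 S, V.forget.Simple ∧ χ = V.grChar }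

end Char

section FieldCoeffs

variable {A : Type u} [CommRing A] {H : Type u} [Ring H] [Algebra A H]
  {𝒜 : ℤ → Submodule A H} {F : Type u} [Field F] [Algebra A F]

/-- The characteristic polynomial of the action of a degree-`0` element of `H` on the
degree-`i` piece of a graded module. -/
noncomputable def GrMod.cpoly (V : GrMod A H 𝒜 F) (h : 𝒜 0) (i : ℤ) : Polynomial F :=
  LinearMap.charpoly (V.degAct h i)

/-- `L` is a graded `O ⊗_A H`-lattice in the graded `F ⊗_A H`-module `V`: an `O`-submodule,
stable under `H`, graded, finitely generated and free over `O`, any `O`-basis of which is an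
`F`-basis of `V`. -/
def GrMod.IsLattice (O : ValuationSubring F) (V : GrMod A H 𝒜 F)
    (L : AddSubgroup V.carrier) : Prop :=
  (∀ c : F, c ∈ O → ∀ x ∈ L, c • x ∈ L) ∧
  (∀ h : H, ∀ x ∈ L, h • x ∈ L) ∧
  (∀ x ∈ L, ∀ i : ℤ, ((DirectSum.decompose V.grading x i : V.grading i) : V.carrier) ∈ L) ∧
  ∃ (n : ℕ) (b : Fin n → V.carrier),
    LinearIndependent F b ∧ Submodule.span F (Set.range b) = ⊤ ∧ (∀ m, b m ∈ L) ∧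
    (∀ x ∈ L, ∃ c : Fin n → F, (∀ m, c m ∈ O) ∧ x = ∑ m, c m • b m)

/-- The subgroup `J(O)·L` of a lattice `L`, where `J(O)` is the maximal ideal
(= nonunits) of the valuation ring `O`. -/
def GrMod.mSub (O : ValuationSubring F) (V : GrMod A H 𝒜 F)
    (L : AddSubgroup V.carrier) : AddSubgroup V.carrier :=
  AddSubgroup.closure { z | ∃ c : O, ¬ IsUnit c ∧ ∃ y ∈ L, z = (c : F) • y }

/-- `φ` exhibits the graded `k ⊗_A H`-module `Y` as the modular reduction `k ⊗_O L` of the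
graded `O ⊗_A H`-lattice `L`, along the surjection `π : O → k` onto the residue field. -/
def GrMod.Reduces {k : Type u} [Field k] [Algebra A k]
    (O : ValuationSubring F) (π : O →+* k)
    (V : GrMod A H 𝒜 F) (L : AddSubgroup V.carrier)
    (Y : GrMod A H 𝒜 k) (φ : L →+ Y.carrier) : Prop :=
  Surjective φ ∧
  (∀ x : L, φ x = 0 ↔ (x : V.carrier) ∈ GrMod.mSub O V L) ∧
  (∀ (c : O) (x y : L), (y : V.carrier) = (c : F) • (x : V.carrier) → φ y = π c • φ x) ∧
  (∀ (h : H) (x y : L), (y : V.carrier) = h • (x : V.carrier) → φ y = h • φ x) ∧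
  (∀ (i : ℤ) (x : L), (x : V.carrier) ∈ V.grading i → φ x ∈ Y.grading i) ∧
  (∀ i : ℤ, ∀ y ∈ Y.grading i, ∃ x : L, (x : V.carrier) ∈ V.grading i ∧ φ x = y)

end FieldCoeffs

/-! Choose finitely many homogeneous vectors `G` spanning `V` over `K` and finitely many
homogeneous elements `B` spanning `H` over `A`. Since `A ⊆ O`, the `O`-span of `B • G` is the
`O H`-submodule generated by `G`; it is graded because it is spanned by homogeneous vectors, and
it spans `V` over `K`. Being finitely generated and torsion-free over the valuation ring `O`, it
is free, and an `O`-basis of it is a `K`-basis of `V` because `K` is the fraction field of `O`. -/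

open Pointwise

theorem DirectSum.Decomposition.exists_finset_isHomogeneousElem_span_eq_top
    {R M ι : Type*} [Semiring R] [AddCommMonoid M] [Module R M] [DecidableEq ι]
    (ℳ : ι → Submodule R M) [Decomposition ℳ] [Module.Finite R M] :
    ∃ s : Finset M, (∀ x ∈ s, SetLike.IsHomogeneousElem ℳ x) ∧
      Submodule.span R (s : Set M) = ⊤ := by
  classical
  obtain ⟨t, ht⟩ := Module.Finite.fg_top (R := R) (M := M)
  refine ⟨t.biUnion fun x ↦ (decompose ℳ x).support.image fun i ↦ (decompose ℳ x i : M),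
    ?_, ?_⟩
  · simp only [Finset.mem_biUnion, Finset.mem_image]
    rintro _ ⟨x, -, i, -, rfl⟩
    exact ⟨i, SetLike.coe_mem _⟩
  · rw [eq_top_iff, ← ht, Submodule.span_le]
    intro x hx
    rw [SetLike.mem_coe, ← sum_support_decompose ℳ x]
    refine Submodule.sum_mem _ fun i hi ↦ Submodule.subset_span ?_
    simp only [Finset.coe_biUnion, Finset.coe_image, Set.mem_iUnion, Set.mem_image]
    exact ⟨x, hx, i, hi, rfl⟩

theorem Submodule.isHomogeneous_span {R K V ι : Type*} [CommSemiring R] [Semiring K]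
    [Algebra R K] [AddCommMonoid V] [Module K V] [Module R V] [IsScalarTower R K V]
    [DecidableEq ι] (ℳ : ι → Submodule K V) [Decomposition ℳ] {s : Set V}
    (hs : ∀ x ∈ s, SetLike.IsHomogeneousElem ℳ x) :
    (Submodule.span R s).IsHomogeneous ℳ := by
  intro i x hx
  induction hx using Submodule.span_induction with
  | mem x hx =>
    obtain ⟨j, hj⟩ := hs x hx
    by_cases hji : j = i
    · subst hji
      rw [decompose_of_mem_same ℳ hj]
      exact Submodule.subset_span hx
    · rw [decompose_of_mem_ne ℳ hj hji]
      exact zero_mem _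
  | zero => simp
  | add x y _ _ hx hy => simpa using add_mem hx hy
  | smul r x _ hx =>
    rw [← algebraMap_smul K r x, decompose_smul, DFinsupp.smul_apply, Submodule.coe_smul,
      algebraMap_smul]
    exact Submodule.smul_mem _ r hx

theorem Submodule.exists_linearIndependent_of_fg_of_valuationRing {R K V : Type*} [CommRing R]
    [IsDomain R] [ValuationRing R] [Field K] [Algebra R K] [IsFractionRing R K]
    [AddCommGroup V] [Module K V] [Module R V] [IsScalarTower R K V]
    (L : Submodule R V) (hL : L.FG) :
    ∃ (n : ℕ) (b : Fin n → V), LinearIndependent K b ∧ (∀ m, b m ∈ L) ∧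
      ∀ x ∈ L, ∃ c : Fin n → R, x = ∑ m, c m • b m := by
  have : Module.Finite R L := Module.Finite.iff_fg.mpr hL
  have : Module.IsTorsionFree R V := .trans_faithfulSMul R K V
  have : Module.Flat R L := by
    rw [Module.Flat.flat_iff_torsion_eq_bot_of_isBezout,
      ← Submodule.isTorsionFree_iff_torsion_eq_bot]
    infer_instance
  have : Module.Free R L := Module.free_of_flat_of_isLocalRing
  let b := Module.finBasis R L
  refine ⟨_, fun m ↦ b m, ?_, fun m ↦ (b m).2, fun x hx ↦ ⟨fun m ↦ b.repr ⟨x, hx⟩ m, ?_⟩⟩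
  · rw [← LinearIndependent.iff_fractionRing R K]
    exact b.linearIndependent.map' L.subtype (Submodule.ker_subtype L)
  · have h := congrArg Subtype.val (b.sum_repr ⟨x, hx⟩).symm
    rwa [Submodule.coe_sum] at h

namespace GrMod

variable {A : Type u} [CommRing A] {H : Type u} [Ring H] [Algebra A H]
  {𝒜 : ℤ → Submodule A H} {K : Type u} [Field K] [Algebra A K]
  (O : ValuationSubring K) (V : GrMod A H 𝒜 K) {B : Set H} {G : Set V.carrier}

theorem isHomogeneous_span_smul (hB : ∀ b ∈ B, SetLike.IsHomogeneousElem 𝒜 b)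
    (hG : ∀ g ∈ G, SetLike.IsHomogeneousElem V.grading g) :
    (Submodule.span O (B • G)).IsHomogeneous V.grading := by
  refine Submodule.isHomogeneous_span _ ?_
  rintro _ ⟨b, hb, g, hg, rfl⟩
  obtain ⟨i, hi⟩ := hB b hb
  obtain ⟨j, hj⟩ := hG g hg
  exact ⟨i + j, V.grading_smul i j b hi g hj⟩

theorem smul_mem_span_smul_of_mem (hAO : ∀ a : A, algebraMap A K a ∈ O)
    (hB : Submodule.span A B = ⊤) (h : H) {g : V.carrier} (hg : g ∈ G) :
    h • g ∈ Submodule.span O (B • G) := by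
  have hh : h ∈ Submodule.span A B := hB ▸ Submodule.mem_top
  induction hh using Submodule.span_induction with
  | mem b hb => exact Submodule.subset_span (Set.smul_mem_smul hb hg)
  | zero => simp
  | add h₁ h₂ _ _ h₁g h₂g => simpa [add_smul] using add_mem h₁g h₂g
  | smul a h _ hhg =>
    rw [Algebra.smul_def, mul_smul, V.compat]
    exact Submodule.smul_mem _ ⟨_, hAO a⟩ hhg

theorem smul_mem_span_smul (hAO : ∀ a : A, algebraMap A K a ∈ O)
    (hB : Submodule.span A B = ⊤) (h : H) {x : V.carrier}
    (hx : x ∈ Submodule.span O (B • G)) : h • x ∈ Submodule.span O (B • G) := by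
  induction hx using Submodule.span_induction with
  | mem _ hx =>
    obtain ⟨b, -, g, hg, rfl⟩ := hx
    rw [← mul_smul]
    exact V.smul_mem_span_smul_of_mem O hAO hB _ hg
  | zero => simp
  | add x y _ _ hx hy => simpa [smul_add] using add_mem hx hy
  | smul c x _ hx =>
    rw [show h • c • x = c • h • x from V.smul_comm' h c x]
    exact Submodule.smul_mem _ c hx

end GrMod

theorem graded_lattice_exists_general
    (A : Type u) [CommRing A]
    (K : Type u) [Field K] [Algebra A K]
    (H : Type u) [Ring H] [Algebra A H] [Module.Finite A H]
    (𝒜 : ℤ → Submodule A H) [GradedAlgebra 𝒜]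
    (O : ValuationSubring K) (hAO : ∀ a : A, algebraMap A K a ∈ O)
    (V : GrMod A H 𝒜 K) :
    ∃ L : AddSubgroup V.carrier, V.IsLattice O L := by
  classical
  obtain ⟨B, hB_hom, hB⟩ := Decomposition.exists_finset_isHomogeneousElem_span_eq_top 𝒜
  obtain ⟨G, hG_hom, hG⟩ := Decomposition.exists_finset_isHomogeneousElem_span_eq_top V.grading
  set L := Submodule.span O ((B : Set H) • (G : Set V.carrier))
  have hGL : (G : Set V.carrier) ⊆ L := fun g hg ↦ by
    simpa using V.smul_mem_span_smul_of_mem O hAO hB 1 hg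
  obtain ⟨n, b, hb_li, hbL, hLb⟩ := L.exists_linearIndependent_of_fg_of_valuationRing (K := K)
    ⟨B • G, by rw [Finset.coe_smul]⟩
  have hb_span : Submodule.span K (Set.range b) = ⊤ := by
    rw [eq_top_iff, ← hG, Submodule.span_le]
    intro g hg
    obtain ⟨c, hc⟩ := hLb g (hGL hg)
    rw [SetLike.mem_coe, hc]
    exact Submodule.sum_mem _ fun m _ ↦
      Submodule.smul_of_tower_mem _ (c m) (Submodule.subset_span ⟨m, rfl⟩)
  refine ⟨L.toAddSubgroup, fun c hc x hx ↦ L.smul_mem ⟨c, hc⟩ hx,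
    fun h x hx ↦ V.smul_mem_span_smul O hAO hB h hx,
    fun x hx i ↦ V.isHomogeneous_span_smul O hB_hom hG_hom i hx,
    n, b, hb_li, hb_span, hbL, fun x hx ↦ ?_⟩
  obtain ⟨c, rfl⟩ := hLb x hx
  exact ⟨fun m ↦ c m, fun m ↦ (c m).2, rfl⟩

/-- Every finite-dimensional graded `K ⊗_A H`-module `V` admits a graded
`O ⊗_A H`-lattice: a graded, `H`-stable, finitely generated free `O`-submodule of `V` any
`O`-basis of which is a `K`-basis of `V`. -/
theorem graded_lattice_exists
    (A : Type u) [CommRing A] [IsDomain A]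
    (K : Type u) [Field K] [Algebra A K] [IsFractionRing A K]
    (H : Type u) [Ring H] [Algebra A H] [Module.Free A H] [Module.Finite A H]
    (𝒜 : ℤ → Submodule A H) [GradedAlgebra 𝒜]
    (O : ValuationSubring K) (hAO : ∀ a : A, algebraMap A K a ∈ O)
    (V : GrMod A H 𝒜 K) :
    ∃ L : AddSubgroup V.carrier, V.IsLattice O L :=
  graded_lattice_exists_general A K H 𝒜 O hAO V
end

section
/- Let A be an integral domain with field of fractions K, H a Z-graded associative A-algebra, finitely generated and free over A, and O a valuation ring with A ⊆ O ⊆ K. For every finite-dimensional graded KH-module V = ⊕_{i∈Z} V_i and every i ∈ Z, there exists a K-basis of V_i such that the corresponding matrix representation ρ_{V_i} : KH_0 → M_{n_i}(K) (where n_i = dim_K V_i) satisfies ρ_{V_i}(h_0) ∈ M_{n_i}(O) for all h_0 ∈ H_0. Consequently, the characteristic polynomial of ρ_{V_i}(h_0) lies in O[X] for all h_0 ∈ H_0 and all i ∈ Z. -/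
/-! Fix `i` and a `K`-basis `e` of `V_i`. Since `H_0` is a finitely generated `A`-module (a direct
summand of `H`) and `A ⊆ O`, the `O`-span `L` of `H_0 · e` is a finitely generated `O`-module; it
spans `V_i` over `K` and is stable under `H_0`. A finitely generated torsion-free module over the
valuation ring `O` is flat, hence free, and an `O`-basis of `L` is a `K`-basis of `V_i`. In that
basis each `h₀ ∈ H_0` has a matrix over `O` because `h₀ L ⊆ L`, and so its characteristic
polynomial lies in `O[X]`. -/

universe u

open DirectSum Function

section Lattice

open Module

theorem Module.free_of_isTorsionFree_of_valuationRing {R M : Type*} [CommRing R] [IsDomain R]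
    [ValuationRing R] [AddCommGroup M] [Module R M] [Module.Finite R M] [IsTorsionFree R M] :
    Module.Free R M :=
  have : Module.Flat R M := Module.Flat.flat_iff_torsion_eq_bot_of_isBezout.mpr
    (Submodule.isTorsionFree_iff_torsion_eq_bot.mp ‹_›)
  Module.free_of_flat_of_isLocalRing

theorem Module.Finite.of_decomposition {ι R M : Type*} [DecidableEq ι] [Semiring R]
    [AddCommMonoid M] [Module R M] (ℳ : ι → Submodule R M) [Decomposition ℳ]
    [Module.Finite R M] (i : ι) : Module.Finite R (ℳ i) :=
  Module.Finite.of_surjective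
    (component R ι (fun i => ℳ i) i ∘ₗ (decomposeLinearEquiv ℳ).toLinearMap)
    fun y => ⟨y, by simp⟩

theorem Matrix.charpoly_coeff_mem_range {R S n : Type*} [CommRing R] [CommRing S] [Fintype n]
    [DecidableEq n] (f : R →+* S) {M : Matrix n n S} (hM : ∀ i j, M i j ∈ f.range) (k : ℕ) :
    M.charpoly.coeff k ∈ f.range := by
  choose M₀ hM₀ using hM
  have hmap : M = (Matrix.of M₀).map f := by
    ext i j
    exact (hM₀ i j).symm
  rw [hmap, Matrix.charpoly_map, Polynomial.coeff_map]
  exact ⟨_, rfl⟩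

variable {R K W : Type*} [CommRing R] [IsDomain R] [ValuationRing R] [Field K] [Algebra R K]
  [IsFractionRing R K] [AddCommGroup W] [Module K W] [Module R W] [IsScalarTower R K W]

theorem Submodule.IsLattice.exists_basis_toMatrix_mem_range (M : Submodule R W)
    [IsLattice K M] :
    ∃ (n : ℕ) (b : Basis (Fin n) K W), ∀ f : W →ₗ[K] W, (∀ x ∈ M, f x ∈ M) →
      ∀ m l, LinearMap.toMatrix b b f m l ∈ (algebraMap R K).range := by
  have := IsTorsionFree.trans_faithfulSMul R K W
  have := free_of_isTorsionFree_of_valuationRing (R := R) (M := M)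
  let c := finBasis R M
  refine ⟨_, c.extendOfIsLattice K, fun f hf m l => ?_⟩
  set y : M := ⟨f (c l), hf _ (c l).2⟩
  have hy : f (c.extendOfIsLattice K l) =
      ∑ k, algebraMap R K (c.repr y k) • c.extendOfIsLattice K k := by
    simp only [Basis.extendOfIsLattice_apply, algebraMap_smul]
    rw [← show (y : W) = f (c l) from rfl]
    conv_lhs => rw [← c.sum_repr y]
    simp only [Submodule.coe_sum, Submodule.coe_smul]
  rw [LinearMap.toMatrix_apply, hy, Basis.repr_sum_self]
  exact ⟨_, rfl⟩

end Lattice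

namespace GrMod

open Module

variable {A : Type u} [CommRing A] {H : Type u} [Ring H] [Algebra A H]
  {𝒜 : ℤ → Submodule A H} {K : Type u} [Field K] [Algebra A K]
  (V : GrMod A H 𝒜 K) (i : ℤ)

@[simp]
theorem coe_degAct_apply (h : 𝒜 0) (x : V.grading i) :
    (V.degAct h i x : V.carrier) = (h : H) • (x : V.carrier) :=
  rfl

theorem degAct_one [SetLike.GradedMonoid 𝒜] : V.degAct 1 i = LinearMap.id := by
  ext x
  simp

theorem degAct_mul [SetLike.GradedMonoid 𝒜] (h h' : 𝒜 0) :
    V.degAct (h * h') i = V.degAct h i ∘ₗ V.degAct h' i := by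
  ext x
  simp [mul_smul]

theorem degAct_zero : V.degAct 0 i = 0 := by
  ext x
  simp

theorem degAct_add (h h' : 𝒜 0) : V.degAct (h + h') i = V.degAct h i + V.degAct h' i := by
  ext x
  simp [add_smul]

theorem degAct_smul (a : A) (h : 𝒜 0) :
    V.degAct (a • h) i = algebraMap A K a • V.degAct h i := by
  ext x
  simp [Algebra.smul_def, mul_smul, V.compat]

variable (O : ValuationSubring K)

theorem degAct_apply_mem_span (hAO : ∀ a : A, algebraMap A K a ∈ O) {s : Set (𝒜 0)}
    {h : 𝒜 0} (hh : h ∈ Submodule.span A s) (x : V.grading i) :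
    V.degAct h i x ∈ Submodule.span O ((fun h' => V.degAct h' i x) '' s) := by
  induction hh using Submodule.span_induction with
  | mem h' hh' => exact Submodule.subset_span ⟨h', hh', rfl⟩
  | zero => simp [degAct_zero]
  | add h₁ h₂ _ _ ih₁ ih₂ => simpa [degAct_add] using add_mem ih₁ ih₂
  | smul a h' _ ih =>
    rw [degAct_smul, LinearMap.smul_apply]
    exact Submodule.smul_mem _ (⟨_, hAO a⟩ : O) ih

noncomputable def degZeroLattice : Submodule O (V.grading i) :=
  Submodule.span O (Set.range fun p : 𝒜 0 × Fin (finrank K (V.grading i)) =>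
    V.degAct p.1 i (finBasis K (V.grading i) p.2))

theorem degAct_mem_degZeroLattice [SetLike.GradedMonoid 𝒜] (h : 𝒜 0) {x : V.grading i}
    (hx : x ∈ V.degZeroLattice i O) :
    V.degAct h i x ∈ V.degZeroLattice i O := by
  have hstable : V.degZeroLattice i O ≤
      (V.degZeroLattice i O).comap ((V.degAct h i).restrictScalars O) := by
    refine Submodule.span_le.mpr ?_
    rintro _ ⟨⟨h', j⟩, rfl⟩
    exact Submodule.subset_span ⟨(h * h', j), by simp [degAct_mul]⟩
  exact hstable hx

theorem degZeroLattice_isLattice [GradedAlgebra 𝒜] [Module.Finite A H]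
    (hAO : ∀ a : A, algebraMap A K a ∈ O) :
    Submodule.IsLattice K (V.degZeroLattice i O) := by
  set e := finBasis K (V.grading i)
  have he : ∀ j, e j ∈ V.degZeroLattice i O := fun j =>
    Submodule.subset_span ⟨(1, j), by simp [degAct_one, e]⟩
  have := Finite.of_decomposition 𝒜 0
  obtain ⟨r, g, hg⟩ := Finite.exists_fin (R := A) (M := 𝒜 0)
  have hfg : V.degZeroLattice i O = Submodule.span O (Set.range fun p : Fin r × Fin _ =>
      V.degAct (g p.1) i (e p.2)) := by
    refine le_antisymm (Submodule.span_le.mpr ?_) (Submodule.span_mono ?_)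
    · rintro _ ⟨⟨h, j⟩, rfl⟩
      refine Submodule.span_mono ?_ (V.degAct_apply_mem_span i O hAO (hg ▸ Submodule.mem_top) _)
      rintro _ ⟨_, ⟨k, rfl⟩, rfl⟩
      exact ⟨(k, j), rfl⟩
    · rintro _ ⟨⟨k, j⟩, rfl⟩
      exact ⟨(g k, j), rfl⟩
  refine ⟨hfg ▸ Submodule.fg_span (Set.finite_range _), eq_top_iff.mpr ?_⟩
  rw [← e.span_eq]
  exact Submodule.span_mono (Set.range_subset_iff.mpr he)

end GrMod

theorem matrix_entries_in_valuation_ring_general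
    (A : Type u) [CommRing A]
    (K : Type u) [Field K] [Algebra A K]
    (H : Type u) [Ring H] [Algebra A H] [Module.Finite A H]
    (𝒜 : ℤ → Submodule A H) [GradedAlgebra 𝒜]
    (O : ValuationSubring K) (hAO : ∀ a : A, algebraMap A K a ∈ O)
    (V : GrMod A H 𝒜 K) :
    (∀ i : ℤ, ∃ (n : ℕ) (b : Module.Basis (Fin n) K (V.grading i)),
        n = Module.finrank K (V.grading i) ∧
        ∀ (h : 𝒜 0) (m l : Fin n), LinearMap.toMatrix b b (V.degAct h i) m l ∈ O) ∧
    (∀ (h : 𝒜 0) (i : ℤ) (m : ℕ), (V.cpoly h i).coeff m ∈ O) := by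
  have mem_of_mem_range : ∀ x ∈ (algebraMap O K).range, x ∈ O := by
    rintro _ ⟨y, rfl⟩
    exact y.2
  have hbasis (i : ℤ) : ∃ (n : ℕ) (b : Module.Basis (Fin n) K (V.grading i)), ∀ h : 𝒜 0,
      ∀ m l, LinearMap.toMatrix b b (V.degAct h i) m l ∈ (algebraMap O K).range := by
    have := V.degZeroLattice_isLattice i O hAO
    obtain ⟨n, b, hb⟩ :=
      Submodule.IsLattice.exists_basis_toMatrix_mem_range (V.degZeroLattice i O)
    exact ⟨n, b, fun h => hb _ fun _ hx => V.degAct_mem_degZeroLattice i O h hx⟩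
  refine ⟨fun i => ?_, fun h i m => ?_⟩
  · obtain ⟨n, b, hb⟩ := hbasis i
    exact ⟨n, b, by simp [Module.finrank_eq_card_basis b],
      fun h m l => mem_of_mem_range _ (hb h m l)⟩
  · obtain ⟨n, b, hb⟩ := hbasis i
    rw [GrMod.cpoly, ← LinearMap.charpoly_toMatrix _ b]
    exact mem_of_mem_range _ (Matrix.charpoly_coeff_mem_range _ (hb h) m)

/-- For every finite-dimensional graded `K ⊗_A H`-module `V` and every
`i ∈ ℤ` there is a `K`-basis of the degree-`i` piece `V_i` in which the matrix of
`ρ_{V_i}(h₀)` has entries in `O` for every `h₀ ∈ H_0`; consequently the characteristic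
polynomial of `ρ_{V_i}(h₀)` lies in `O[X]`. -/
theorem matrix_entries_in_valuation_ring
    (A : Type u) [CommRing A] [IsDomain A]
    (K : Type u) [Field K] [Algebra A K] [IsFractionRing A K]
    (H : Type u) [Ring H] [Algebra A H] [Module.Free A H] [Module.Finite A H]
    (𝒜 : ℤ → Submodule A H) [GradedAlgebra 𝒜]
    (O : ValuationSubring K) (hAO : ∀ a : A, algebraMap A K a ∈ O)
    (V : GrMod A H 𝒜 K) :
    (∀ i : ℤ, ∃ (n : ℕ) (b : Module.Basis (Fin n) K (V.grading i)),
        n = Module.finrank K (V.grading i) ∧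
        ∀ (h : 𝒜 0) (m l : Fin n), LinearMap.toMatrix b b (V.degAct h i) m l ∈ O) ∧
    (∀ (h : 𝒜 0) (i : ℤ) (m : ℕ), (V.cpoly h i).coeff m ∈ O) :=
  matrix_entries_in_valuation_ring_general A K H 𝒜 O hAO V
end

section
/- Let A be an integral domain with field of fractions K, H a Z-graded associative A-algebra, finitely generated and free over A, and let A* denote the integral closure of A in K. Then for every finite-dimensional graded KH-module V = ⊕_{i∈Z} V_i, every h_0 ∈ H_0 and every i ∈ Z, the characteristic polynomial of ρ_{V_i}(h_0) has all its coefficients in A*. In particular, if A is integrally closed in K, then p_K maps R_0^+(KH) into Maps(H_0, A[X]^Z). -/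
universe u

open DirectSum Function

section Aux

open Polynomial

theorem aux_dvd_pow {K : Type u} [Field K] (h : K[X]) :
    ∀ n : ℕ, ∀ g : K[X], g ≠ 0 → g.natDegree ≤ n →
      (∀ q : K[X], q.Monic → Irreducible q → q ∣ g → q ∣ h) → g ∣ h ^ n := by
  intro n
  induction n with
  | zero =>
    intro g hg hd _
    rw [pow_zero]
    obtain ⟨a, rfl⟩ := Polynomial.natDegree_eq_zero.mp (Nat.le_zero.mp hd)
    exact (Polynomial.isUnit_C.mpr (IsUnit.mk0 a (fun h0 => hg (by simp [h0])))).dvd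
  | succ n ih =>
    intro g hg hd hfac
    by_cases hu : IsUnit g
    · exact hu.dvd
    obtain ⟨q, hqm, hqirr, hqdvd⟩ := Polynomial.exists_monic_irreducible_factor g hu
    obtain ⟨g', rfl⟩ := hqdvd
    have hq0 : q ≠ 0 := hqirr.ne_zero
    have hg' : g' ≠ 0 := fun h0 => hg (by simp [h0])
    have hqdeg : 1 ≤ q.natDegree :=
      natDegree_pos_iff_degree_pos.mpr (degree_pos_of_irreducible hqirr)
    have hdeg : g'.natDegree ≤ n := by
      have := Polynomial.natDegree_mul hq0 hg'
      omega
    have h1 : g' ∣ h ^ n :=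
      ih g' hg' hdeg fun r hrm hr hrd => hfac r hrm hr (hrd.trans (dvd_mul_left g' q))
    have h2 : q ∣ h := hfac q hqm hqirr (dvd_mul_right q g')
    calc q * g' ∣ h * h ^ n := mul_dvd_mul h2 h1
      _ = h ^ (n + 1) := (pow_succ' h n).symm

theorem aux_aeval_mulVec {L : Type u} [Field L] {d : ℕ} (N : Matrix (Fin d) (Fin d) L)
    (v : Fin d → L) (μ : L) (hv : N.mulVec v = μ • v) (p : L[X]) :
    (Polynomial.aeval N p).mulVec v = Polynomial.eval μ p • v := by
  have hpow : ∀ k : ℕ, (N ^ k).mulVec v = μ ^ k • v := by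
    intro k
    induction k with
    | zero => simp [Matrix.one_mulVec]
    | succ k ih =>
      rw [pow_succ', ← Matrix.mulVec_mulVec, ih, Matrix.mulVec_smul, hv, pow_succ',
        smul_smul, mul_comm]
  induction p using Polynomial.induction_on' with
  | add p q hp hq =>
    rw [map_add, Matrix.add_mulVec, hp, hq, Polynomial.eval_add, add_smul]
  | monomial k a =>
    rw [Polynomial.aeval_monomial, Polynomial.eval_monomial, ← Matrix.mulVec_mulVec, hpow,
      Matrix.mulVec_smul, Algebra.algebraMap_eq_smul_one, Matrix.smul_mulVec,
      Matrix.one_mulVec, smul_smul, mul_comm]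

theorem aux_charpoly_coeff_mem (A : Type u) (K : Type u) [CommRing A] [Field K] [Algebra A K]
    (M : Type u) [AddCommGroup M] [Module K M] [Module.Finite K M]
    (f : M →ₗ[K] M) (p : A[X]) (hp : p.Monic)
    (hf : Polynomial.aeval f (p.map (algebraMap A K)) = 0) (m : ℕ) :
    (LinearMap.charpoly f).coeff m ∈ integralClosure A K := by
  classical
  set r : K[X] := p.map (algebraMap A K) with hrdef
  let b := Module.finBasis K M
  set N : Matrix _ _ K := LinearMap.toMatrix b b f with hNdef
  have hchar : LinearMap.charpoly f = N.charpoly := (LinearMap.charpoly_toMatrix f b).symm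
  have hNr : Polynomial.aeval N r = 0 := by
    have he : N = LinearMap.toMatrixAlgEquiv b f := rfl
    rw [he, Polynomial.aeval_algHom_apply (LinearMap.toMatrixAlgEquiv b) f r, hf, map_zero]
  have key : ∀ q : K[X], q.Monic → Irreducible q → q ∣ N.charpoly → q ∣ r := by
    intro q hqm hqirr hqdvd
    set L := AlgebraicClosure K with hLdef
    obtain ⟨μ, hμ⟩ : ∃ μ : L, ((q.map (algebraMap K L)).eval μ = 0) :=
      IsAlgClosed.exists_root (q.map (algebraMap K L)) (by
        rw [Polynomial.degree_map]
        exact (Polynomial.degree_pos_of_irreducible hqirr).ne')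
    set N' := N.map (algebraMap K L) with hN'def
    have hcharroot : (N'.charpoly).eval μ = 0 := by
      rw [Matrix.charpoly_map]
      exact Polynomial.eval_eq_zero_of_dvd_of_eval_eq_zero
        (Polynomial.map_dvd _ hqdvd) hμ
    have hdet : (μ • (1 : Matrix _ _ L) - N').det = 0 := by
      have hh : Polynomial.eval μ N'.charpoly = (μ • (1 : Matrix _ _ L) - N').det := by
        rw [Matrix.charpoly, ← Polynomial.coe_evalRingHom, RingHom.map_det]
        congr 1
        ext i j
        by_cases hij : i = j
        · subst hij
          simp [RingHom.mapMatrix_apply, Matrix.map_apply, Matrix.charmatrix_apply_eq,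
            Matrix.sub_apply, Matrix.one_apply]
        · simp [RingHom.mapMatrix_apply, Matrix.map_apply,
            Matrix.charmatrix_apply_ne _ _ _ hij, Matrix.sub_apply, Matrix.one_apply, hij]
      rw [← hh]; exact hcharroot
    obtain ⟨v, hv0, hveq⟩ := Matrix.exists_mulVec_eq_zero_iff.mpr hdet
    have hvμ : N'.mulVec v = μ • v := by
      rw [Matrix.sub_mulVec, sub_eq_zero] at hveq
      rw [← hveq, Matrix.smul_mulVec, Matrix.one_mulVec]
    have hN'r : Polynomial.aeval N' (r.map (algebraMap K L)) = 0 := by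
      rw [Polynomial.aeval_map_algebraMap]
      have hmm := Polynomial.aeval_algHom_apply
        (AlgHom.mapMatrix (R := K) (Algebra.ofId K L)) N r
      have hmap : (AlgHom.mapMatrix (R := K) (Algebra.ofId K L)) N = N' := by
        ext i j
        simp [AlgHom.mapMatrix_apply, Algebra.ofId_apply, hN'def]
      rw [hmap] at hmm
      rw [hmm, hNr, map_zero]
    have heval := aux_aeval_mulVec N' v μ hvμ (r.map (algebraMap K L))
    rw [hN'r] at heval
    have hev0 : (r.map (algebraMap K L)).eval μ = 0 := by
      rcases smul_eq_zero.mp (by rw [← heval, Matrix.zero_mulVec]) with h | h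
      · exact h
      · exact absurd h hv0
    have haevr : Polynomial.aeval μ r = 0 := by
      rw [Polynomial.aeval_def, Polynomial.eval₂_eq_eval_map]; exact hev0
    have haevq : Polynomial.aeval μ q = 0 := by
      rw [Polynomial.aeval_def, Polynomial.eval₂_eq_eval_map]; exact hμ
    have hqeq : q = minpoly K μ := minpoly.eq_of_irreducible_of_monic hqirr haevq hqm
    exact hqeq.symm ▸ minpoly.dvd K μ haevr
  have hdvd : N.charpoly ∣ r ^ N.charpoly.natDegree :=
    aux_dvd_pow r _ N.charpoly N.charpoly_monic.ne_zero le_rfl key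
  have hlift : N.charpoly ∈ Polynomial.lifts (algebraMap (integralClosure A K) K) := by
    refine integralClosure.mem_lifts_of_monic_of_dvd_map K
      (f := p ^ N.charpoly.natDegree) (hp.pow _) N.charpoly_monic ?_
    rwa [Polynomial.map_pow]
  obtain ⟨y, hy⟩ := (Polynomial.lifts_iff_coeff_lifts _).mp hlift m
  rw [hchar, ← hy]
  exact y.2

end Aux

/-- For every finite-dimensional graded `K ⊗_A H`-module `V`, every
`h₀ ∈ H_0` and every `i ∈ ℤ`, the coefficients of the characteristic polynomial of
`ρ_{V_i}(h₀)` lie in the integral closure `A*` of `A` in `K`; in particular if `A` is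
integrally closed, they lie in (the image of) `A`, so `p_K` maps `R_0^+(KH)` into
`Maps(H_0, A[X]^ℤ)`. -/
theorem charpoly_coeffs_integral
    (A : Type u) [CommRing A] [IsDomain A]
    (K : Type u) [Field K] [Algebra A K] [IsFractionRing A K]
    (H : Type u) [Ring H] [Algebra A H] [Module.Free A H] [Module.Finite A H]
    (𝒜 : ℤ → Submodule A H) [GradedAlgebra 𝒜] :
    (∀ (V : GrMod A H 𝒜 K) (h : 𝒜 0) (i : ℤ) (m : ℕ),
        (V.cpoly h i).coeff m ∈ integralClosure A K) ∧
    (IsIntegrallyClosed A →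
      ∀ (V : GrMod A H 𝒜 K) (h : 𝒜 0) (i : ℤ) (m : ℕ),
        ∃ a : A, (V.cpoly h i).coeff m = algebraMap A K a) := by
  have main : ∀ (V : GrMod A H 𝒜 K) (h : 𝒜 0) (i : ℤ) (m : ℕ),
      (V.cpoly h i).coeff m ∈ integralClosure A K := by
    intro V h i m
    obtain ⟨p, hp, hp0⟩ := IsIntegral.of_finite A (h : H)
    have claim : ∀ q : Polynomial A, ∀ x : V.grading i,
        ((Polynomial.aeval (V.degAct h i) (q.map (algebraMap A K))) x : V.carrier)
          = (Polynomial.aeval (h : H) q) • (x : V.carrier) := by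
      intro q
      induction q using Polynomial.induction_on' with
      | add a b ha hb =>
        intro x
        rw [Polynomial.map_add, map_add, LinearMap.add_apply, Submodule.coe_add, ha, hb,
          map_add, add_smul]
      | monomial n a =>
        intro x
        have hpow : ∀ (k : ℕ) (y : V.grading i),
            (((V.degAct h i) ^ k) y : V.carrier) = (h : H) ^ k • (y : V.carrier) := by
          intro k
          induction k with
          | zero => intro y; simp
          | succ k ih =>
            intro y
            rw [pow_succ, Module.End.mul_apply, ih]
            have hd : ((V.degAct h i) y : V.carrier) = (h : H) • (y : V.carrier) := rfl
            rw [hd, ← mul_smul, ← pow_succ]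
        rw [Polynomial.map_monomial, Polynomial.aeval_monomial, Polynomial.aeval_monomial,
          Module.End.mul_apply, Module.algebraMap_end_apply, Submodule.coe_smul, hpow,
          mul_smul, V.compat]
    have hf : Polynomial.aeval (V.degAct h i) (p.map (algebraMap A K)) = 0 := by
      apply LinearMap.ext
      intro x
      have h2 : ((Polynomial.aeval (V.degAct h i) (p.map (algebraMap A K))) x : V.carrier)
          = 0 := by
        rw [claim p x, Polynomial.aeval_def, hp0, zero_smul]
      simp only [LinearMap.zero_apply]
      exact Subtype.ext (by simpa using h2)
    exact aux_charpoly_coeff_mem A K (V.grading i) (V.degAct h i) p hp hf m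
  refine ⟨main, fun hIC V h i m => ?_⟩
  obtain ⟨a, ha⟩ := IsIntegrallyClosed.isIntegral_iff.mp (main V h i m)
  exact ⟨a, ha.symm⟩
end

section
/- Let A be an integral domain, integrally closed in its field of fractions K, H a Z-graded associative A-algebra, finitely generated and free over A, θ : A → L a ring homomorphism into a field L with L the field of fractions of θ(A), and O ⊆ K a valuation ring with A ⊆ O and J(O) ∩ A = Ker(θ); assume LH is split, or L equals the residue field k of O and L is perfect. Then the graded decomposition map d^gr_θ satisfies the commutative diagram p_L ∘ d^gr_θ = t_θ ∘ p_K : R_0^+(KH) → Maps(H_0, L[X]^Z), where t_θ is obtained by applying θ to the coefficients of polynomials in A[X]. Concretely: for every finite-dimensional graded KH-module V with graded OH-lattice Ṽ, every h_0 ∈ H_0 and every i ∈ Z, the characteristic polynomial of the action of h_0 on (k ⊗_O Ṽ)_i is obtained by applying θ coefficientwise to the characteristic polynomial of ρ_{V_i}(h_0), which lies in A[X]. -/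
universe u

open DirectSum Function

/-!
Let `Ṽ_i = Ṽ ∩ V_i` be the degree-`i` part of the lattice. It is a finitely generated torsion-free
module over the valuation ring `O`, hence free, and an `O`-basis of it is a `K`-basis of `V_i`
whose image is a `k`-basis of `(k ⊗_O Ṽ)_i`. In these bases `h₀` acts by one matrix over `O` and
by its images in `K` and `k`, so both characteristic polynomials are images of a single `P ∈ O[X]`.
The coefficients of the characteristic polynomial on `V_i` lie in `A`, because `h₀` is integral
over `A` (so all eigenvalues are) and `A` is integrally closed; reducing them modulo `J(O)` gives
their images under `θ`.
-/

open Polynomial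

theorem LinearMap.exists_charpoly_coeff_eq_algebraMap {A K W : Type*} [CommRing A] [IsDomain A]
    [IsIntegrallyClosed A] [Field K] [Algebra A K] [IsFractionRing A K] [AddCommGroup W]
    [Module K W] [FiniteDimensional K W] (f : Module.End K W) {p : A[X]} (hp : p.Monic)
    (hf : aeval f (p.map (algebraMap A K)) = 0) (m : ℕ) :
    ∃ a : A, f.charpoly.coeff m = algebraMap A K a := by
  let Kb := AlgebraicClosure K
  let g := f.baseChange Kb
  have hg : aeval g (p.map (algebraMap A Kb)) = 0 := by
    have := congrArg (Module.End.baseChangeHom K Kb W) hf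
    rw [map_zero, ← aeval_algHom_apply, aeval_map_algebraMap] at this
    rwa [aeval_map_algebraMap]
  have hroots : ∀ μ, g.charpoly.IsRoot μ → IsIntegral A μ := fun μ hμ => by
    obtain ⟨v, hv⟩ :=
      ((Module.End.hasEigenvalue_iff_isRoot_charpoly g μ).2 hμ).exists_hasEigenvector
    have := Module.End.aeval_apply_of_hasEigenvector (p := p.map (algebraMap A Kb)) hv
    rw [hg, LinearMap.zero_apply, eq_comm, smul_eq_zero, eval_map_algebraMap] at this
    exact ⟨p, hp, this.resolve_right hv.2⟩
  have hint := isIntegral_coeff_of_factors g.charpoly (by simp [g.charpoly_monic, isIntegral_one])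
    (IsAlgClosed.splits _) hroots m
  rw [LinearMap.charpoly_baseChange, coeff_map] at hint
  obtain ⟨a, ha⟩ := IsIntegrallyClosed.isIntegral_iff.mp
    ((isIntegral_algebraMap_iff (algebraMap K Kb).injective).mp hint)
  exact ⟨a, ha.symm⟩

section Semilinear

variable {R S M N ι : Type*} [CommRing R] [CommRing S] {π : R →+* S} [AddCommGroup M]
  [Module R M] [AddCommGroup N] [Module S N] [Fintype ι]

theorem Module.Basis.repr_semilinear_apply {ψ : M →ₛₗ[π] N} {c : Module.Basis ι R M}
    {d : Module.Basis ι S N} (hd : ∀ t, d t = ψ (c t)) (x : M) (t : ι) :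
    d.repr (ψ x) t = π (c.repr x t) := by
  have : ψ x = ∑ s, π (c.repr x s) • d s := by
    conv_lhs => rw [← c.sum_repr x]
    simp only [map_sum, LinearMap.map_smulₛₗ, hd]
  rw [this, d.repr_sum_self]

noncomputable def Module.Basis.ofSurjectiveSemilinear (c : Module.Basis ι R M)
    (ψ : M →ₛₗ[π] N) (hπ : Function.Surjective π) (hψ : Function.Surjective ψ)
    (hker : ∀ x, ψ x = 0 → ∀ t, π (c.repr x t) = 0) : Module.Basis ι S N :=
  .mk (v := fun t => ψ (c t))
    (Fintype.linearIndependent_iff.mpr fun g hg t => by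
      choose γ hγ using fun t => hπ (g t)
      have hψ0 : ψ (∑ s, γ s • c s) = 0 := by
        simpa only [map_sum, LinearMap.map_smulₛₗ, hγ] using hg
      simpa only [c.repr_sum_self, hγ] using hker _ hψ0 t)
    (fun y _ => by
      obtain ⟨x, rfl⟩ := hψ y
      rw [← c.sum_repr x, map_sum]
      exact Submodule.sum_mem _ fun t _ => by
        rw [LinearMap.map_smulₛₗ]
        exact Submodule.smul_mem _ _ (Submodule.subset_span ⟨t, rfl⟩))

theorem Module.Basis.ofSurjectiveSemilinear_apply (c : Module.Basis ι R M)
    (ψ : M →ₛₗ[π] N) (hπ : Function.Surjective π) (hψ : Function.Surjective ψ)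
    (hker : ∀ x, ψ x = 0 → ∀ t, π (c.repr x t) = 0) (t : ι) :
    c.ofSurjectiveSemilinear ψ hπ hψ hker t = ψ (c t) :=
  Module.Basis.mk_apply ..

theorem LinearMap.charpoly_eq_map_of_semilinear [DecidableEq ι] [Module.Free R M]
    [Module.Finite R M] [Module.Free S N] [Module.Finite S N] {ψ : M →ₛₗ[π] N}
    {c : Module.Basis ι R M} {d : Module.Basis ι S N} (hd : ∀ t, d t = ψ (c t))
    {f : M →ₗ[R] M} {g : N →ₗ[S] N} (hfg : ∀ x, ψ (f x) = g (ψ x)) :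
    g.charpoly = f.charpoly.map π := by
  have : LinearMap.toMatrix d d g = (LinearMap.toMatrix c c f).map π := by
    ext l t
    rw [Matrix.map_apply, LinearMap.toMatrix_apply, LinearMap.toMatrix_apply, hd, ← hfg]
    exact Module.Basis.repr_semilinear_apply hd _ _
  rw [← g.charpoly_toMatrix d, this, Matrix.charpoly_map, f.charpoly_toMatrix c]

end Semilinear

-- Finitely generated torsion-free modules over a Bézout domain are flat, and finitely generated
-- flat modules over a local ring are free.
theorem Submodule.IsLattice.free_of_valuationRing {R K V : Type*} [CommRing R] [IsDomain R]
    [ValuationRing R] [Field K] [Algebra R K] [Module.IsTorsionFree R K] [AddCommGroup V]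
    [Module K V] [Module R V] [IsScalarTower R K V] (M : Submodule R V) [M.IsLattice K] :
    Module.Free R M :=
  have : Module.IsTorsionFree R V := Module.IsTorsionFree.trans K
  have : Module.Flat R M := Module.Flat.flat_iff_torsion_eq_bot_of_isBezout.mpr
    (Submodule.isTorsionFree_iff_torsion_eq_bot.mp inferInstance)
  Module.free_of_flat_of_isLocalRing

namespace GrMod

section Action

variable {A : Type u} [CommRing A] {H : Type u} [Ring H] [Algebra A H]
  {𝒜 : ℤ → Submodule A H} {S : Type u} [CommRing S] [Algebra A S]

theorem degAct_pow_apply (V : GrMod A H 𝒜 S) (h : 𝒜 0) (i : ℤ) (d : ℕ) (x : V.grading i) :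
    (((V.degAct h i ^ d) x : V.grading i) : V.carrier) = (h : H) ^ d • (x : V.carrier) := by
  induction d with
  | zero => simp
  | succ d ih => rw [pow_succ', Module.End.mul_apply, pow_succ', mul_smul, ← ih]; rfl

theorem aeval_degAct_apply (V : GrMod A H 𝒜 S) (h : 𝒜 0) (i : ℤ) (q : A[X]) (x : V.grading i) :
    ((aeval (V.degAct h i) (q.map (algebraMap A S)) x : V.grading i) : V.carrier) =
      aeval (h : H) q • (x : V.carrier) := by
  induction q using Polynomial.induction_on' with
  | add f g hf hg => simp only [Polynomial.map_add, map_add, LinearMap.add_apply,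
      Submodule.coe_add, hf, hg, add_smul]
  | monomial d c =>
    rw [Polynomial.map_monomial, aeval_monomial, aeval_monomial, Module.End.mul_apply,
      Module.algebraMap_end_apply, Submodule.coe_smul, degAct_pow_apply, mul_smul,
      V.compat]

noncomputable def proj (V : GrMod A H 𝒜 S) (i : ℤ) : V.carrier →ₗ[S] V.grading i :=
  DirectSum.component S ℤ (fun j => V.grading j) i ∘ₗ
    (DirectSum.decomposeLinearEquiv V.grading).toLinearMap

theorem proj_coe (V : GrMod A H 𝒜 S) (i : ℤ) (x : V.grading i) : V.proj i x = x :=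
  Subtype.ext (DirectSum.decompose_of_mem_same V.grading x.2)

end Action

theorem exists_cpoly_coeff_eq_algebraMap {A K H : Type u} [CommRing A] [IsDomain A]
    [IsIntegrallyClosed A] [Field K] [Algebra A K] [IsFractionRing A K] [Ring H] [Algebra A H]
    [Algebra.IsIntegral A H] {𝒜 : ℤ → Submodule A H} (V : GrMod A H 𝒜 K) (h : 𝒜 0) (i : ℤ)
    (m : ℕ) : ∃ a : A, (V.cpoly h i).coeff m = algebraMap A K a := by
  obtain ⟨p, hp, hph⟩ := Algebra.IsIntegral.isIntegral (R := A) (h : H)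
  refine (V.degAct h i).exists_charpoly_coeff_eq_algebraMap hp ?_ m
  ext x
  rw [aeval_degAct_apply, aeval_def, hph, zero_smul]
  rfl

section Lattice

variable {A : Type u} [CommRing A] {H : Type u} [Ring H] [Algebra A H]
  {𝒜 : ℤ → Submodule A H} {F : Type u} [Field F] [Algebra A F]
  {O : ValuationSubring F} {V : GrMod A H 𝒜 F} {LV : AddSubgroup V.carrier}

namespace IsLattice

def toSubmodule (hlat : V.IsLattice O LV) : Submodule O V.carrier where
  carrier := LV
  add_mem' := LV.add_mem
  zero_mem' := LV.zero_mem
  smul_mem' c x := hlat.1 c c.2 x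

def piece (hlat : V.IsLattice O LV) (i : ℤ) : Submodule O (V.grading i) :=
  hlat.toSubmodule.comap ((V.grading i).subtype.restrictScalars O)

theorem piece_eq_map (hlat : V.IsLattice O LV) (i : ℤ) :
    hlat.piece i = hlat.toSubmodule.map ((V.proj i).restrictScalars O) := by
  ext x
  constructor
  · exact fun hx => ⟨x, hx, V.proj_coe i x⟩
  · rintro ⟨y, hy, rfl⟩
    exact hlat.2.2.1 y hy i

theorem fg_toSubmodule (hlat : V.IsLattice O LV) : hlat.toSubmodule.FG := by
  obtain ⟨n, b, -, -, hbL, hbO⟩ := hlat.2.2.2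
  refine Submodule.fg_def.mpr ⟨Set.range b, Set.finite_range b,
    le_antisymm (Submodule.span_le.mpr ?_) fun x hx => ?_⟩
  · exact Set.range_subset_iff.mpr hbL
  · obtain ⟨c, hc, rfl⟩ := hbO x hx
    refine Submodule.sum_mem _ fun m _ => ?_
    exact Submodule.smul_of_tower_mem _ (⟨c m, hc m⟩ : O) (Submodule.subset_span (by simp))

theorem span_piece (hlat : V.IsLattice O LV) (i : ℤ) :
    Submodule.span F (hlat.piece i : Set (V.grading i)) = ⊤ := by
  obtain ⟨n, b, -, hb, hbL, -⟩ := hlat.2.2.2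
  have hsurj : Function.Surjective (V.proj i) := fun x => ⟨x, V.proj_coe i x⟩
  rw [eq_top_iff, ← LinearMap.range_eq_top.mpr hsurj, LinearMap.range_eq_map, ← hb,
    Submodule.map_span]
  refine Submodule.span_mono ?_
  rintro - ⟨-, ⟨m, rfl⟩, rfl⟩
  exact hlat.2.2.1 (b m) (hbL m) i

instance isLattice_piece (hlat : V.IsLattice O LV) (i : ℤ) : (hlat.piece i).IsLattice F where
  fg := hlat.piece_eq_map i ▸ hlat.fg_toSubmodule.map _
  span_eq_top := hlat.span_piece i

instance free_piece (hlat : V.IsLattice O LV) (i : ℤ) : Module.Free O (hlat.piece i) :=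
  Submodule.IsLattice.free_of_valuationRing (K := F) _

noncomputable def basis (hlat : V.IsLattice O LV) (i : ℤ) :
    Module.Basis (Module.Free.ChooseBasisIndex O (hlat.piece i)) F (V.grading i) :=
  (Module.Free.chooseBasis O (hlat.piece i)).extendOfIsLattice F

-- Semilinear over `algebraMap O F`, so that `V_i` and the reduction `Y_i` are both handled by
-- `LinearMap.charpoly_eq_map_of_semilinear`.
def pieceInclusion (hlat : V.IsLattice O LV) (i : ℤ) :
    hlat.piece i →ₛₗ[algebraMap O F] V.grading i where
  toFun := Subtype.val
  map_add' _ _ := rfl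
  map_smul' c x := (algebraMap_smul F c (x : V.grading i)).symm

theorem repr_basis_coe (hlat : V.IsLattice O LV) {i : ℤ} (x : hlat.piece i) (t) :
    (hlat.basis i).repr x t = (Module.Free.chooseBasis O (hlat.piece i)).repr x t :=
  Module.Basis.repr_semilinear_apply (ψ := hlat.pieceInclusion i)
    (fun t => Module.Basis.extendOfIsLattice_apply F _ t) x t

noncomputable def pieceAct (hlat : V.IsLattice O LV) (h : 𝒜 0) (i : ℤ) :
    Module.End O (hlat.piece i) :=
  ((V.degAct h i).restrictScalars O).restrict fun x hx => hlat.2.1 (h : H) x hx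

theorem cpoly_eq_map (hlat : V.IsLattice O LV) (h : 𝒜 0) (i : ℤ) :
    V.cpoly h i = (hlat.pieceAct h i).charpoly.map (algebraMap O F) := by
  classical
  exact LinearMap.charpoly_eq_map_of_semilinear (ψ := hlat.pieceInclusion i)
    (c := Module.Free.chooseBasis O (hlat.piece i)) (d := hlat.basis i)
    (fun t => Module.Basis.extendOfIsLattice_apply F _ t) (fun x => rfl)

end IsLattice

theorem exists_mem_maximalIdeal_of_mem_mSub (ℓ : V.carrier →ₗ[F] F) (hℓ : ∀ y ∈ LV, ℓ y ∈ O)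
    {z : V.carrier} (hz : z ∈ GrMod.mSub O V LV) :
    ∃ o ∈ IsLocalRing.maximalIdeal O, ℓ z = o := by
  induction hz using AddSubgroup.closure_induction with
  | mem z hz =>
    obtain ⟨c, hc, y, hy, rfl⟩ := hz
    refine ⟨c * ⟨ℓ y, hℓ y hy⟩, Ideal.mul_mem_right _ _ hc, ?_⟩
    rw [map_smul, smul_eq_mul]
    rfl
  | zero => exact ⟨0, Ideal.zero_mem _, by simp⟩
  | add x y _ _ hx hy =>
    obtain ⟨o, ho, hx⟩ := hx
    obtain ⟨o', ho', hy⟩ := hy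
    exact ⟨o + o', Ideal.add_mem _ ho ho', by rw [map_add, hx, hy]; rfl⟩
  | neg x _ hx =>
    obtain ⟨o, ho, hx⟩ := hx
    exact ⟨-o, neg_mem ho, by rw [map_neg, hx]; rfl⟩

namespace Reduces

variable {k : Type u} [Field k] [Algebra A k] {π : O →+* k} {Y : GrMod A H 𝒜 k}
  {φ : LV →+ Y.carrier}

def pieceMap (hred : GrMod.Reduces O π V LV Y φ) (hlat : V.IsLattice O LV) (i : ℤ) :
    hlat.piece i →ₛₗ[π] Y.grading i where
  toFun x := ⟨φ ⟨x, x.2⟩, hred.2.2.2.2.1 i _ x.1.2⟩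
  map_add' x y := Subtype.ext (map_add φ ⟨x, x.2⟩ ⟨y, y.2⟩)
  map_smul' c x := Subtype.ext (hred.2.2.1 c ⟨x, x.2⟩ _ rfl)

theorem pieceMap_surjective (hred : GrMod.Reduces O π V LV Y φ) (hlat : V.IsLattice O LV)
    (i : ℤ) : Function.Surjective (hred.pieceMap hlat i) := fun y => by
  obtain ⟨x, hxi, hxy⟩ := hred.2.2.2.2.2 i y y.2
  exact ⟨⟨⟨x, hxi⟩, x.2⟩, Subtype.ext hxy⟩

theorem repr_eq_zero_of_pieceMap_eq_zero (hred : GrMod.Reduces O π V LV Y φ)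
    (hlat : V.IsLattice O LV) (hπker : ∀ o : O, π o = 0 ↔ ¬ IsUnit o) {i : ℤ}
    {x : hlat.piece i} (hx : hred.pieceMap hlat i x = 0) (t) :
    π ((Module.Free.chooseBasis O (hlat.piece i)).repr x t) = 0 := by
  have hz : ((x : V.grading i) : V.carrier) ∈ GrMod.mSub O V LV :=
    (hred.2.1 ⟨x, x.2⟩).1 (congrArg Subtype.val hx)
  -- `ℓ` is `O`-valued on `Ṽ`, hence maps `J(O)·Ṽ` into `J(O)`.
  let ℓ := (hlat.basis i).coord t ∘ₗ V.proj i
  have hℓ : ∀ y ∈ LV, ℓ y ∈ O := fun y hy => by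
    simpa [ℓ] using congrArg (· ∈ O) (hlat.repr_basis_coe ⟨V.proj i y, hlat.2.2.1 y hy i⟩ t)
  obtain ⟨o, ho, hℓz⟩ := exists_mem_maximalIdeal_of_mem_mSub ℓ hℓ hz
  have : (Module.Free.chooseBasis O (hlat.piece i)).repr x t = o := by
    apply Subtype.ext
    rw [← hlat.repr_basis_coe, ← hℓz]
    simp [ℓ, V.proj_coe]
  rw [this, hπker]
  exact (IsLocalRing.mem_maximalIdeal o).mp ho

theorem cpoly_eq_map (hred : GrMod.Reduces O π V LV Y φ) (hlat : V.IsLattice O LV)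
    (hπ : Function.Surjective π) (hπker : ∀ o : O, π o = 0 ↔ ¬ IsUnit o) (h : 𝒜 0) (i : ℤ) :
    Y.cpoly h i = (hlat.pieceAct h i).charpoly.map π := by
  classical
  let c := Module.Free.chooseBasis O (hlat.piece i)
  exact LinearMap.charpoly_eq_map_of_semilinear (ψ := hred.pieceMap hlat i) (c := c)
    (d := c.ofSurjectiveSemilinear _ hπ (hred.pieceMap_surjective hlat i)
      fun _ hx => hred.repr_eq_zero_of_pieceMap_eq_zero hlat hπker hx)
    (fun t => c.ofSurjectiveSemilinear_apply ..)
    (fun x => Subtype.ext (hred.2.2.2.1 (h : H) ⟨x, x.2⟩ _ rfl))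

end Reduces

end Lattice

end GrMod

theorem graded_decomposition_map_diagram_general
    (A : Type u) [CommRing A] [IsDomain A] [IsIntegrallyClosed A]
    (K : Type u) [Field K] [Algebra A K] [IsFractionRing A K]
    (H : Type u) [Ring H] [Algebra A H] [Module.Finite A H]
    (𝒜 : ℤ → Submodule A H)
    (O : ValuationSubring K) (hAO : ∀ a : A, algebraMap A K a ∈ O)
    (k : Type u) [Field k] [Algebra A k]
    (π : O →+* k) (hπsurj : Function.Surjective π)
    (hπker : ∀ o : O, π o = 0 ↔ ¬ IsUnit o)
    (hπA : ∀ a : A, π ⟨algebraMap A K a, hAO a⟩ = algebraMap A k a) :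
    ∀ (V : GrMod A H 𝒜 K) (LV : AddSubgroup V.carrier), V.IsLattice O LV →
    ∀ (Y : GrMod A H 𝒜 k) (φV : LV →+ Y.carrier), GrMod.Reduces O π V LV Y φV →
    ∀ (h : 𝒜 0) (i : ℤ),
      (∀ m : ℕ, ∃ a : A, (V.cpoly h i).coeff m = algebraMap A K a) ∧
      (∀ (m : ℕ) (a : A), (V.cpoly h i).coeff m = algebraMap A K a →
        (Y.cpoly h i).coeff m = algebraMap A k a) := by
  intro V LV hlat Y φV hred h i
  refine ⟨V.exists_cpoly_coeff_eq_algebraMap h i, fun m a ha => ?_⟩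
  have hcoeff : (hlat.pieceAct h i).charpoly.coeff m = ⟨algebraMap A K a, hAO a⟩ := by
    rw [hlat.cpoly_eq_map, coeff_map] at ha
    exact Subtype.ext ha
  rw [hred.cpoly_eq_map hlat hπsurj hπker, coeff_map, hcoeff, hπA]

/-- In the setting of the graded decomposition map, the diagram
`p_L ∘ d^gr_θ = t_θ ∘ p_K` commutes.  Concretely: for every finite-dimensional graded
`KH`-module `V` with graded `O ⊗_A H`-lattice `Ṽ` and modular reduction `k ⊗_O Ṽ`, every
`h₀ ∈ H_0` and every `i ∈ ℤ`, the characteristic polynomial of `ρ_{V_i}(h₀)` has all its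
coefficients in (the image of) `A`, and the characteristic polynomial of the action of `h₀`
on `(k ⊗_O Ṽ)_i` is obtained from it by applying `θ` coefficientwise. -/
theorem graded_decomposition_map_diagram
    (A : Type u) [CommRing A] [IsDomain A] [IsIntegrallyClosed A]
    (K : Type u) [Field K] [Algebra A K] [IsFractionRing A K]
    (H : Type u) [Ring H] [Algebra A H] [Module.Free A H] [Module.Finite A H]
    (𝒜 : ℤ → Submodule A H) [GradedAlgebra 𝒜]
    (L : Type u) [Field L] [Algebra A L]
    (hLfrac : ∀ x : L, ∃ a b : A,
      algebraMap A L b ≠ 0 ∧ x * algebraMap A L b = algebraMap A L a)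
    (O : ValuationSubring K) (hAO : ∀ a : A, algebraMap A K a ∈ O)
    (hJO : ∀ a : A, ¬ IsUnit (⟨algebraMap A K a, hAO a⟩ : O) ↔ algebraMap A L a = 0)
    (k : Type u) [Field k] [Algebra A k]
    (π : O →+* k) (hπsurj : Function.Surjective π)
    (hπker : ∀ o : O, π o = 0 ↔ ¬ IsUnit o)
    (hπA : ∀ a : A, π ⟨algebraMap A K a, hAO a⟩ = algebraMap A k a)
    (τ : L →+* k) (hτ : ∀ a : A, τ (algebraMap A L a) = algebraMap A k a)
    (hass : SplitAlg A H L ∨ (Function.Surjective τ ∧ PerfectField L)) :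
    ∀ (V : GrMod A H 𝒜 K) (LV : AddSubgroup V.carrier), V.IsLattice O LV →
    ∀ (Y : GrMod A H 𝒜 k) (φV : LV →+ Y.carrier), GrMod.Reduces O π V LV Y φV →
    ∀ (h : 𝒜 0) (i : ℤ),
      (∀ m : ℕ, ∃ a : A, (V.cpoly h i).coeff m = algebraMap A K a) ∧
      (∀ (m : ℕ) (a : A), (V.cpoly h i).coeff m = algebraMap A K a →
        (Y.cpoly h i).coeff m = algebraMap A k a) :=
  graded_decomposition_map_diagram_general A K H 𝒜 O hAO k π hπsurj hπker hπA
end
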